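/- arXiv:2207.06631 — 4 statements merged into one kernel-verified Lean document; each statement's English description precedes it below -/
import Mathlib

section
/- The influence function is submodular in the lattice sense: for all subsets S, T ⊆ 𝔹𝕊 of billboard slots, I(S) + I(T) ≥ I(S ∪ T) + I(S ∩ T). -/
open Finset

/-- The influence of a set `S` of billboard slots:
`I(S) = Σ_{u ∈ Users} [1 − Π_{b ∈ S} (1 − Pr b u)]`. -/
noncomputable def infl {B U : Type*} (Users : Finset U) (Pr : B → U → ℝ)
    (S : Finset B) : ℝ :=
  ∑ u ∈ Users, (1 - ∏ b ∈ S, (1 - Pr b u))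

/-- Submodularity (lattice form): for all S, T ⊆ 𝔹𝕊,
I(S) + I(T) ≥ I(S ∪ T) + I(S ∩ T). -/
theorem influence_submodular_lattice {B U : Type*} [DecidableEq B]
    (BS : Finset B) (Users : Finset U) (Pr : B → U → ℝ)
    (hPr : ∀ b ∈ BS, ∀ u ∈ Users, 0 ≤ Pr b u ∧ Pr b u ≤ 1)
    (S T : Finset B) (hS : S ⊆ BS) (hT : T ⊆ BS) :
    infl Users Pr (S ∪ T) + infl Users Pr (S ∩ T) ≤
      infl Users Pr S + infl Users Pr T := by
  unfold infl
  rw [← Finset.sum_add_distrib, ← Finset.sum_add_distrib]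
  apply Finset.sum_le_sum
  intro u hu
  -- per-user goal: suffices P_S + P_T ≤ P_{S∪T} + P_{S∩T}
  have hfac : ∀ F : Finset B, F ⊆ BS → (∀ b ∈ F, 0 ≤ 1 - Pr b u ∧ 1 - Pr b u ≤ 1) := by
    intro F hF b hb
    have := hPr b (hF hb) u hu
    constructor <;> linarith [this.1, this.2]
  set A := ∏ b ∈ S ∩ T, (1 - Pr b u) with hA
  set x := ∏ b ∈ S \ T, (1 - Pr b u) with hx
  set y := ∏ b ∈ T \ S, (1 - Pr b u) with hy
  have hSdec : (∏ b ∈ S, (1 - Pr b u)) = A * x := by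
    have he : S = (S ∩ T) ∪ (S \ T) := by ext b; simp; tauto
    have hd : Disjoint (S ∩ T) (S \ T) := by
      rw [Finset.disjoint_left]
      intro b hb hb'
      exact (Finset.mem_sdiff.1 hb').2 (Finset.mem_inter.1 hb).2
    rw [hA, hx]
    calc (∏ b ∈ S, (1 - Pr b u)) = ∏ b ∈ (S ∩ T) ∪ (S \ T), (1 - Pr b u) := by rw [← he]
      _ = _ := Finset.prod_union hd
  have hTdec : (∏ b ∈ T, (1 - Pr b u)) = A * y := by
    have he : T = (S ∩ T) ∪ (T \ S) := by ext b; simp; tauto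
    have hd : Disjoint (S ∩ T) (T \ S) := by
      rw [Finset.disjoint_left]
      intro b hb hb'
      exact (Finset.mem_sdiff.1 hb').2 (Finset.mem_inter.1 hb).1
    rw [hA, hy]
    calc (∏ b ∈ T, (1 - Pr b u)) = ∏ b ∈ (S ∩ T) ∪ (T \ S), (1 - Pr b u) := by rw [← he]
      _ = _ := Finset.prod_union hd
  have hUdec : (∏ b ∈ S ∪ T, (1 - Pr b u)) = A * x * y := by
    have he : S ∪ T = S ∪ (T \ S) := (Finset.union_sdiff_self_eq_union).symm
    have hd : Disjoint S (T \ S) := by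
      rw [Finset.disjoint_left]
      intro b hb hb'
      exact (Finset.mem_sdiff.1 hb').2 hb
    rw [← hSdec]
    calc (∏ b ∈ S ∪ T, (1 - Pr b u)) = ∏ b ∈ S ∪ (T \ S), (1 - Pr b u) := by rw [← he]
      _ = _ := Finset.prod_union hd
  have hA0 : 0 ≤ A := Finset.prod_nonneg fun b hb =>
    (hfac (S ∩ T) (fun c hc => hS (Finset.mem_inter.1 hc).1) b hb).1
  have hx1 : x ≤ 1 := Finset.prod_le_one
    (fun b hb => (hfac (S \ T) (fun c hc => hS (Finset.mem_sdiff.1 hc).1) b hb).1)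
    (fun b hb => (hfac (S \ T) (fun c hc => hS (Finset.mem_sdiff.1 hc).1) b hb).2)
  have hy1 : y ≤ 1 := Finset.prod_le_one
    (fun b hb => (hfac (T \ S) (fun c hc => hT (Finset.mem_sdiff.1 hc).1) b hb).1)
    (fun b hb => (hfac (T \ S) (fun c hc => hT (Finset.mem_sdiff.1 hc).1) b hb).2)
  rw [hSdec, hTdec, hUdec]
  nlinarith [mul_nonneg (mul_nonneg hA0 (sub_nonneg.2 hx1)) (sub_nonneg.2 hy1)]
end

section
/- Preprocessing preserves the optimum: let 𝔹𝕊' = {b ∈ 𝔹𝕊 : I({b}) > 0} be the set of slots with positive individual influence, and let k be a positive integer with k ≤ |𝔹𝕊'|. Then the maximum of I(S) over subsets S ⊆ 𝔹𝕊' with |S| = k equals the maximum of I(S) over subsets S ⊆ 𝔹𝕊 with |S| = k. -/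
open Finset

/-- Monotonicity of influence. -/
lemma infl_mono_aux {B U : Type*} [DecidableEq B]
    (Users : Finset U) (Pr : B → U → ℝ) {S T : Finset B}
    (hST : S ⊆ T) (h01 : ∀ b ∈ T, ∀ u ∈ Users, 0 ≤ Pr b u ∧ Pr b u ≤ 1) :
    infl Users Pr S ≤ infl Users Pr T := by
  unfold infl
  apply Finset.sum_le_sum
  intro u hu
  have hprod : (∏ b ∈ T, (1 - Pr b u)) ≤ ∏ b ∈ S, (1 - Pr b u) := by
    rw [← Finset.prod_sdiff hST]
    have h1 : (∏ b ∈ T \ S, (1 - Pr b u)) ≤ 1 := by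
      apply Finset.prod_le_one
      · intro b hb
        have := h01 b (Finset.sdiff_subset hb) u hu
        linarith [this.1, this.2]
      · intro b hb
        have := h01 b (Finset.sdiff_subset hb) u hu
        linarith [this.1]
    have h2 : 0 ≤ ∏ b ∈ S, (1 - Pr b u) := by
      apply Finset.prod_nonneg
      intro b hb
      have := h01 b (hST hb) u hu
      linarith [this.2]
    nlinarith
  linarith

/-- Slots with nonpositive singleton influence have all-zero probabilities. -/
lemma zero_of_not_pos {B U : Type*} (Users : Finset U) (Pr : B → U → ℝ)
    {b : B} (hb : ∀ u ∈ Users, 0 ≤ Pr b u ∧ Pr b u ≤ 1)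
    (h : ¬ 0 < infl Users Pr {b}) : ∀ u ∈ Users, Pr b u = 0 := by
  have hsum : infl Users Pr {b} = ∑ u ∈ Users, Pr b u := by
    unfold infl
    apply Finset.sum_congr rfl
    intro u hu
    simp
  have hle : infl Users Pr {b} ≤ 0 := not_lt.mp h
  have hzero : ∑ u ∈ Users, Pr b u = 0 := by
    have hnn : 0 ≤ ∑ u ∈ Users, Pr b u :=
      Finset.sum_nonneg fun u hu => (hb u hu).1
    linarith [hsum ▸ hle]
  exact fun u hu =>
    (Finset.sum_eq_zero_iff_of_nonneg fun u hu => (hb u hu).1).mp hzero u hu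

/-- Preprocessing preserves the optimum: with
𝔹𝕊' = {b ∈ 𝔹𝕊 : I({b}) > 0} and 0 < k ≤ |𝔹𝕊'|, the maximum of I over k-subsets of
𝔹𝕊' equals the maximum of I over k-subsets of 𝔹𝕊. -/
theorem preprocessing_preserves_optimum {B U : Type*} [DecidableEq B]
    (BS : Finset B) (Users : Finset U) (Pr : B → U → ℝ)
    (hPr : ∀ b ∈ BS, ∀ u ∈ Users, 0 ≤ Pr b u ∧ Pr b u ≤ 1)
    (k : ℕ) (hk : 0 < k)
    (hkcard : k ≤ (BS.filter fun b => 0 < infl Users Pr {b}).card) :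
    ((BS.filter fun b => 0 < infl Users Pr {b}).powersetCard k).sup'
        (Finset.powersetCard_nonempty.mpr hkcard) (infl Users Pr) =
      (BS.powersetCard k).sup'
        (Finset.powersetCard_nonempty.mpr
          (hkcard.trans (Finset.card_le_card (Finset.filter_subset _ _))))
        (infl Users Pr) := by
  set BS' := BS.filter fun b => 0 < infl Users Pr {b} with hBS'
  apply le_antisymm
  · apply Finset.sup'_le
    intro S hS
    rw [Finset.mem_powersetCard] at hS
    apply Finset.le_sup'
    rw [Finset.mem_powersetCard]
    exact ⟨hS.1.trans (Finset.filter_subset _ _), hS.2⟩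
  · apply Finset.sup'_le
    intro S hS
    rw [Finset.mem_powersetCard] at hS
    obtain ⟨hSB, hScard⟩ := hS
    -- the good part of S
    have hinter : S ∩ BS' ⊆ BS' := Finset.inter_subset_right
    have hcardle : (S ∩ BS').card ≤ k := by
      calc (S ∩ BS').card ≤ S.card := Finset.card_le_card Finset.inter_subset_left
        _ = k := hScard
    obtain ⟨T, hsubT, hTsub, hTcard⟩ :=
      Finset.exists_subsuperset_card_eq hinter hcardle hkcard
    have heq : infl Users Pr S = infl Users Pr (S ∩ BS') := by
      unfold infl
      apply Finset.sum_congr rfl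
      intro u hu
      congr 1
      apply (Finset.prod_subset Finset.inter_subset_left ?_).symm
      intro b hbS hbI
      have hbBS' : b ∉ BS' := fun h => hbI (Finset.mem_inter.mpr ⟨hbS, h⟩)
      have hbnot : ¬ 0 < infl Users Pr {b} := by
        intro h
        exact hbBS' (Finset.mem_filter.mpr ⟨hSB hbS, h⟩)
      have := zero_of_not_pos Users Pr (hPr b (hSB hbS)) hbnot u hu
      rw [this]; ring
    have hle2 : infl Users Pr (S ∩ BS') ≤ infl Users Pr T :=
      infl_mono_aux Users Pr hsubT
        (fun b hb u hu => hPr b (Finset.filter_subset _ _ (hTsub hb)) u hu)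
    calc infl Users Pr S = infl Users Pr (S ∩ BS') := heq
      _ ≤ infl Users Pr T := hle2
      _ ≤ _ := Finset.le_sup' _ (Finset.mem_powersetCard.mpr ⟨hTsub, hTcard⟩)
end

section
/- Correctness of the hitting-set reduction (0/1 probabilities compute coverage): let 𝒰 be a finite ground set, 𝒳 a finite family of subsets of 𝒰, take 𝔹𝕊 = 𝒰 as the set of billboard slots and the family 𝒳 as the set of users, and define the influence probability Pr(b, x) = 1 if b ∈ x and Pr(b, x) = 0 otherwise. Then for every S ⊆ 𝒰, the influence I(S) = Σ_{x ∈ 𝒳} [1 − Π_{b ∈ S} (1 − Pr(b,x))] equals the number of sets x ∈ 𝒳 with x ∩ S ≠ ∅. -/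
open Finset

/-- Hitting-set reduction correctness: with slots the ground set 𝒰,
users the family 𝒳 of subsets of 𝒰, and Pr(b,x) = 1 if b ∈ x else 0, the influence
I(S) = Σ_{x ∈ 𝒳} [1 − Π_{b ∈ S} (1 − Pr(b,x))] equals the number of x ∈ 𝒳 with
x ∩ S ≠ ∅. -/
theorem hitting_set_reduction_influence {α : Type*} [DecidableEq α]
    (𝒰 : Finset α) (𝒳 : Finset (Finset α)) (h𝒳 : ∀ x ∈ 𝒳, x ⊆ 𝒰)
    (S : Finset α) (hS : S ⊆ 𝒰) :
    (∑ x ∈ 𝒳, (1 - ∏ b ∈ S, (1 - if b ∈ x then (1 : ℝ) else 0))) =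
      ((𝒳.filter fun x => (x ∩ S).Nonempty).card : ℝ) := by
  rw [Finset.card_filter, Nat.cast_sum]
  refine Finset.sum_congr rfl fun x _ => ?_
  by_cases h : (x ∩ S).Nonempty
  · obtain ⟨b, hb⟩ := h
    simp only [Finset.mem_inter] at hb
    rw [Finset.prod_eq_zero hb.2 (by simp [hb.1])]
    rw [if_pos ⟨b, Finset.mem_inter.2 hb⟩]; ring
  · rw [Finset.prod_eq_one]
    · simp [h]
    · intro b hbS
      have : b ∉ x := fun hbx => h ⟨b, Finset.mem_inter.2 ⟨hbx, hbS⟩⟩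
      simp [this]
end

section
/- Equivalence underlying the NP-hardness reduction: let 𝒰 be a finite ground set, 𝒳 a finite family of subsets of 𝒰, and define influence probabilities on slots 𝔹𝕊 = 𝒰 and users 𝒳 by Pr(b, x) = 1 if b ∈ x and 0 otherwise, with influence I(S) = Σ_{x ∈ 𝒳} [1 − Π_{b ∈ S} (1 − Pr(b,x))]. Then for every positive integer k ≤ |𝒰|, there exists a hitting set H ⊆ 𝒰 with |H| = k (i.e., H ∩ x ≠ ∅ for every x ∈ 𝒳) if and only if there exists S ⊆ 𝔹𝕊 with |S| = k and I(S) = |𝒳|. -/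
open Finset


lemma term_eq' {α : Type*} [DecidableEq α] (S x : Finset α) :
    (1 - ∏ b ∈ S, (1 - if b ∈ x then (1 : ℝ) else 0)) =
      if (S ∩ x).Nonempty then 1 else 0 := by
  by_cases h : (S ∩ x).Nonempty
  · simp only [h, if_true]
    obtain ⟨b, hb⟩ := h
    simp only [mem_inter] at hb
    have : (∏ b ∈ S, (1 - if b ∈ x then (1 : ℝ) else 0)) = 0 :=
      Finset.prod_eq_zero hb.1 (by simp [hb.2])
    rw [this]; ring
  · simp only [h, if_false]
    have : (∏ b ∈ S, (1 - if b ∈ x then (1 : ℝ) else 0)) = 1 := by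
      apply Finset.prod_eq_one
      intro b hb
      have : b ∉ x := fun hbx => h ⟨b, mem_inter.mpr ⟨hb, hbx⟩⟩
      simp [this]
    rw [this]; ring

/-- NP-hardness reduction equivalence: with slots 𝔹𝕊 = 𝒰, users 𝒳, and
Pr(b,x) = 1 if b ∈ x else 0, for every positive k ≤ |𝒰| there exists a hitting set
H ⊆ 𝒰 with |H| = k iff there exists S ⊆ 𝔹𝕊 with |S| = k and I(S) = |𝒳|. -/
theorem hitting_set_reduction_equiv {α : Type*} [DecidableEq α]
    (𝒰 : Finset α) (𝒳 : Finset (Finset α)) (h𝒳 : ∀ x ∈ 𝒳, x ⊆ 𝒰)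
    (k : ℕ) (hk : 0 < k) (hk𝒰 : k ≤ 𝒰.card) :
    (∃ H ⊆ 𝒰, H.card = k ∧ ∀ x ∈ 𝒳, (H ∩ x).Nonempty) ↔
      (∃ S ⊆ 𝒰, S.card = k ∧
        (∑ x ∈ 𝒳, (1 - ∏ b ∈ S, (1 - if b ∈ x then (1 : ℝ) else 0))) =
          (𝒳.card : ℝ)) := by
  constructor
  · rintro ⟨H, hH𝒰, hcard, hhit⟩
    refine ⟨H, hH𝒰, hcard, ?_⟩
    rw [Finset.sum_congr rfl (fun x hx => term_eq' H x)]
    rw [Finset.sum_congr rfl (fun x hx => if_pos (hhit x hx))]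
    simp
  · rintro ⟨S, hS𝒰, hcard, hsum⟩
    refine ⟨S, hS𝒰, hcard, ?_⟩
    rw [Finset.sum_congr rfl (fun x _ => term_eq' S x)] at hsum
    intro x hx
    by_contra hne
    have hlt : (∑ x ∈ 𝒳, if (S ∩ x).Nonempty then (1:ℝ) else 0) < 𝒳.card := by
      calc (∑ x ∈ 𝒳, if (S ∩ x).Nonempty then (1:ℝ) else 0)
          < ∑ _x ∈ 𝒳, (1:ℝ) := by
            apply Finset.sum_lt_sum
            · intro i _; split <;> norm_num
            · exact ⟨x, hx, by simp [hne]⟩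
        _ = 𝒳.card := by simp
    exact absurd hsum (ne_of_lt hlt)
end
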